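/- In the free associative algebra A over a field of characteristic zero, [M_3, L_k] ⊆ L_{k+3} for every k ≥ 1, where M_3 is the two-sided ideal generated by L_3. -/
import Mathlib


/-- The commutator `[a,b] = a*b - b*a`. -/
def br {A : Type*} [Ring A] (a b : A) : A := a * b - b * a

/-- Lower central series: `lcs K A 1 = A`, `lcs K A (k+1) = span {[a,l] | a ∈ A, l ∈ lcs K A k}`. -/
def lcs (K : Type*) [Field K] (A : Type*) [Ring A] [Algebra K A] : ℕ → Submodule K A
  | 0 => ⊤
  | 1 => ⊤
  | (k+2) => Submodule.span K {x : A | ∃ a l : A, l ∈ lcs K A (k+1) ∧ x = a * l - l * a}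

/-- `mIdeal K A j = A·L_j·A`, the two-sided ideal generated by `L_j`. -/
def mIdeal (K : Type*) [Field K] (A : Type*) [Ring A] [Algebra K A] (j : ℕ) : Submodule K A :=
  Submodule.span K {x : A | ∃ a l b : A, l ∈ lcs K A j ∧ x = a * l * b}

section Aux

variable {K : Type*} [Field K] {A : Type*} [Ring A] [Algebra K A]

lemma lcs_succ_succ (n : ℕ) :
    lcs K A (n+2) = Submodule.span K {x : A | ∃ a l : A, l ∈ lcs K A (n+1) ∧ x = a * l - l * a} :=
  rfl

lemma br_mem_succ {n : ℕ} {l : A} (hl : l ∈ lcs K A n) (a : A) :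
    br a l ∈ lcs K A (n+1) := by
  cases n with
  | zero => exact Submodule.mem_top
  | succ n =>
    rw [lcs_succ_succ]
    exact Submodule.subset_span ⟨a, l, hl, rfl⟩

lemma br_mem_succ' {n : ℕ} {l : A} (hl : l ∈ lcs K A n) (a : A) :
    br l a ∈ lcs K A (n+1) := by
  have h : br l a = -br a l := by simp only [br]; abel
  rw [h]
  exact neg_mem (br_mem_succ hl a)

lemma lcs_succ_le (n : ℕ) : lcs K A (n+1) ≤ lcs K A n := by
  induction n with
  | zero => exact le_top
  | succ n ih =>
    cases n with
    | zero => exact le_top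
    | succ n =>
      rw [lcs_succ_succ, lcs_succ_succ]
      apply Submodule.span_mono
      rintro x ⟨a, l, hl, rfl⟩
      exact ⟨a, l, ih hl, rfl⟩

/-- Jacobi identity for `br`. -/
lemma br_jacobi (m p l : A) : br m (br p l) = br (br m p) l + br p (br m l) := by
  simp only [br]; noncomm_ring

lemma br_add_right (l x y : A) : br l (x + y) = br l x + br l y := by
  simp only [br]; noncomm_ring

lemma br_smul_right (c : K) (l x : A) : br l (c • x) = c • br l x := by
  simp only [br, Algebra.mul_smul_comm, Algebra.smul_mul_assoc, smul_sub]

lemma br_zero_right (l : A) : br l (0 : A) = 0 := by simp [br]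

/-- `[γ_i, γ_{j+1}] ⊆ γ_{i+j+1}` for the Lie lower central series. -/
lemma lie_lcs_mem : ∀ (j i : ℕ) (l m : A), l ∈ lcs K A i → m ∈ lcs K A (j+1) →
    br l m ∈ lcs K A (i+j+1) := by
  intro j
  induction j with
  | zero =>
    intro i l m hl _
    exact br_mem_succ' hl m
  | succ j ih =>
    intro i l m hl hm
    rw [lcs_succ_succ] at hm
    induction hm using Submodule.span_induction with
    | mem x hx =>
      obtain ⟨p, l', hl', rfl⟩ := hx
      have h1 : br l (p * l' - l' * p) = br (br l p) l' + br p (br l l') := by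
        simp only [br]; noncomm_ring
      rw [h1]
      refine add_mem ?_ ?_
      · have hlp : br l p ∈ lcs K A (i+1) := br_mem_succ' hl p
        have := ih (i+1) (br l p) l' hlp hl'
        have he : i + 1 + j + 1 = i + (j+1) + 1 := by omega
        rwa [he] at this
      · have hll' : br l l' ∈ lcs K A (i+j+1) := ih i l l' hl hl'
        have := br_mem_succ hll' p
        have he : i + j + 1 + 1 = i + (j+1) + 1 := by omega
        rwa [he] at this
    | zero => rw [br_zero_right]; exact zero_mem _
    | add x y _ _ hx hy =>
      rw [br_add_right]; exact add_mem hx hy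
    | smul c x _ hx =>
      rw [br_smul_right]; exact Submodule.smul_mem _ c hx

end Aux

section Key

variable {K : Type*} [Field K] [CharZero K] {A : Type*} [Ring A] [Algebra K A]

/-- `[aℓ,c] + [cℓ,a] ∈ L₄` for `ℓ ∈ L₃`. -/
lemma lemB {ℓ : A} (hℓ : ℓ ∈ lcs K A 3) (a c : A) :
    br (a * ℓ) c + br (c * ℓ) a ∈ lcs K A 4 := by
  have hW : br a (br ℓ c) + br c (br ℓ a) + br ℓ (c * a) + br ℓ (a * c) ∈ lcs K A 4 := by
    refine add_mem (add_mem (add_mem ?_ ?_) ?_) ?_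
    · exact lcs_succ_le 4 (br_mem_succ (br_mem_succ' hℓ c) a)
    · exact lcs_succ_le 4 (br_mem_succ (br_mem_succ' hℓ a) c)
    · exact br_mem_succ' hℓ (c * a)
    · exact br_mem_succ' hℓ (a * c)
  have h2 : (2 : K) • (br (a * ℓ) c + br (c * ℓ) a) =
      br a (br ℓ c) + br c (br ℓ a) + br ℓ (c * a) + br ℓ (a * c) := by
    rw [two_smul]
    simp only [br]; noncomm_ring
  have h2ne : (2 : K) ≠ 0 := two_ne_zero
  rw [← Submodule.smul_mem_iff _ h2ne, h2]
  exact hW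

/-- `[a[u,m],c] + [u[a,m],c] ∈ L₄` for `m ∈ L₂`. -/
lemma lemA {m : A} (hm : m ∈ lcs K A 2) (a u c : A) :
    br (a * br u m) c + br (u * br a m) c ∈ lcs K A 4 := by
  have h : br (a * br u m) c + br (u * br a m) c =
      br (br (a * u) m) c - br (br (br a m) u) c := by
    simp only [br]; noncomm_ring
  rw [h]
  refine sub_mem ?_ ?_
  · exact br_mem_succ' (br_mem_succ hm (a * u)) c
  · exact lcs_succ_le 4 (br_mem_succ' (br_mem_succ' (br_mem_succ hm a) u) c)

/-- The function `H(a,c,u,v,w) = [a·[u,[v,w]], c]` in `A ⧸ L₄`. -/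
noncomputable def hq (K : Type*) [Field K] (A : Type*) [Ring A] [Algebra K A]
    (a c u v w : A) : A ⧸ lcs K A 4 :=
  Submodule.mkQ (lcs K A 4) (br (a * br u (br v w)) c)

lemma hq_r1 (a c u v w : A) : hq K A a c u v w = - hq K A u c a v w := by
  have hm : br v w ∈ lcs K A 2 := br_mem_succ Submodule.mem_top v
  have h := lemA (K := K) hm a u c
  have h0 := (Submodule.Quotient.mk_eq_zero (lcs K A 4)).mpr h
  rw [Submodule.Quotient.mk_add] at h0
  exact eq_neg_of_add_eq_zero_left h0

lemma hq_r2 (a c u v w : A) : hq K A a c u v w = - hq K A c a u v w := by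
  have hℓ : br u (br v w) ∈ lcs K A 3 :=
    br_mem_succ (br_mem_succ Submodule.mem_top v) u
  have h := lemB (K := K) hℓ a c
  have h0 := (Submodule.Quotient.mk_eq_zero (lcs K A 4)).mpr h
  rw [Submodule.Quotient.mk_add] at h0
  exact eq_neg_of_add_eq_zero_left h0

lemma hq_r3 (a c u v w : A) : hq K A a c u v w = - hq K A a c u w v := by
  unfold hq
  have h : br (a * br u (br v w)) c = - br (a * br u (br w v)) c := by
    simp only [br]; noncomm_ring
  rw [h, map_neg]

lemma hq_r4 (a c u v w : A) :
    hq K A a c u v w = hq K A a c v u w - hq K A a c w u v := by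
  unfold hq
  have h : br (a * br u (br v w)) c =
      br (a * br v (br u w)) c - br (a * br w (br u v)) c := by
    simp only [br]; noncomm_ring
  rw [h, map_sub]

lemma hq_s2 (a c u v w : A) :
    hq K A a c u v w = hq K A v c u a w - hq K A w c u a v := by
  rw [hq_r1 a c u v w, hq_r4 u c a v w, hq_r1 u c v a w, hq_r1 u c w a v]
  abel

lemma hq_s1 (a c u v w : A) : hq K A a c u v w = hq K A v c w a u := by
  have h1 := hq_r4 (K := K) a c u v w
  have h2 := hq_s2 (K := K) a c v u w
  have h3 := hq_s2 (K := K) a c w u v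
  have h4 := hq_s2 (K := K) a c u v w
  rw [hq_r1 u c v a w, hq_r1 w c v a u] at h2
  rw [hq_r1 u c w a v] at h3
  have key : (hq K A a c u v w - hq K A v c w a u) +
      (hq K A a c u v w - hq K A v c w a u) = 0 := by
    have e : hq K A a c u v w + hq K A a c u v w
        = hq K A v c w a u + hq K A v c w a u := by
      calc hq K A a c u v w + hq K A a c u v w
          = (hq K A a c v u w - hq K A a c w u v)
            + (hq K A v c u a w - hq K A w c u a v) := by rw [← h1, ← h4]
        _ = ((-hq K A v c u a w - -hq K A v c w a u)
              - (-hq K A w c u a v - hq K A v c w a u))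
            + (hq K A v c u a w - hq K A w c u a v) := by rw [h2, h3]
        _ = hq K A v c w a u + hq K A v c w a u := by abel
    calc (hq K A a c u v w - hq K A v c w a u) + (hq K A a c u v w - hq K A v c w a u)
        = (hq K A a c u v w + hq K A a c u v w)
          - (hq K A v c w a u + hq K A v c w a u) := by abel
      _ = 0 := by rw [e]; abel
  have h2ne : (2 : K) ≠ 0 := two_ne_zero
  have hs : (2 : K) • (hq K A a c u v w - hq K A v c w a u) = 0 := by
    rw [two_smul]; exact key
  have := (smul_eq_zero.mp hs).resolve_left h2ne
  exact sub_eq_zero.mp this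

/-- slot2 ↔ slot4 antisymmetry. -/
lemma hq_r5 (x1 x2 x3 x4 x5 : A) : hq K A x1 x2 x3 x4 x5 = - hq K A x1 x4 x3 x2 x5 := by
  have h1 := hq_s1 (K := K) x4 x2 x5 x1 x3
  -- h1 : hq x4 x2 x5 x1 x3 = hq x1 x2 x3 x4 x5
  have h2 := hq_r2 (K := K) x4 x2 x5 x1 x3
  -- h2 : hq x4 x2 x5 x1 x3 = - hq x2 x4 x5 x1 x3
  have h3 := hq_s1 (K := K) x2 x4 x5 x1 x3
  -- h3 : hq x2 x4 x5 x1 x3 = hq x1 x4 x3 x2 x5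
  rw [← h1, h2, h3]

/-- slot1 ↔ slot4 antisymmetry. -/
lemma hq_t14 (x1 x2 x3 x4 x5 : A) : hq K A x1 x2 x3 x4 x5 = - hq K A x4 x2 x3 x1 x5 := by
  rw [hq_r2 x1 x2 x3 x4 x5, hq_r5 x2 x1 x3 x4 x5, hq_r2 x2 x4 x3 x1 x5]
  abel

/-- slot3 ↔ slot4 antisymmetry. -/
lemma hq_t34 (x1 x2 x3 x4 x5 : A) : hq K A x1 x2 x3 x4 x5 = - hq K A x1 x2 x4 x3 x5 := by
  rw [hq_r1 x1 x2 x3 x4 x5, hq_t14 x3 x2 x1 x4 x5, hq_r1 x4 x2 x1 x3 x5]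
  abel

lemma hq_eq_zero (a c u v w : A) : hq K A a c u v w = 0 := by
  have h1 := hq_r4 (K := K) a c u v w
  rw [hq_t34 a c v u w] at h1
  have h2 : hq K A a c w u v = hq K A a c u v w := by
    rw [hq_t34 a c w u v, hq_r3 a c u w v]
    abel
  rw [h2] at h1
  -- h1 : T = -T - T
  have key : hq K A a c u v w + (hq K A a c u v w + hq K A a c u v w) = 0 := by
    calc hq K A a c u v w + (hq K A a c u v w + hq K A a c u v w)
        = (- hq K A a c u v w - hq K A a c u v w)
          + (hq K A a c u v w + hq K A a c u v w) := by rw [← h1]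
      _ = 0 := by abel
  have h3ne : (3 : K) ≠ 0 := three_ne_zero
  have hs : (3 : K) • hq K A a c u v w = 0 := by
    have : ((3 : K)) • hq K A a c u v w
        = hq K A a c u v w + (hq K A a c u v w + hq K A a c u v w) := by
      have h3 : (3 : K) = 1 + 1 + 1 := by norm_num
      rw [h3, add_smul, add_smul, one_smul]; abel
    rw [this]; exact key
  exact (smul_eq_zero.mp hs).resolve_left h3ne

/-- The key concrete case: `[a[u,[v,w]], c] ∈ L₄`. -/
lemma key_concrete (a c u v w : A) : br (a * br u (br v w)) c ∈ lcs K A 4 := by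
  have := hq_eq_zero (K := K) a c u v w
  unfold hq at this
  rw [Submodule.mkQ_apply] at this
  exact (Submodule.Quotient.mk_eq_zero (lcs K A 4)).mp this

/-- `[aℓ, c] ∈ L₄` for `ℓ ∈ L₃`. -/
lemma keyL {ℓ : A} (hℓ : ℓ ∈ lcs K A 3) (a c : A) : br (a * ℓ) c ∈ lcs K A 4 := by
  rw [lcs_succ_succ] at hℓ
  induction hℓ using Submodule.span_induction with
  | mem x hx =>
    obtain ⟨u, l2, hl2, rfl⟩ := hx
    rw [lcs_succ_succ] at hl2
    induction hl2 using Submodule.span_induction with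
    | mem y hy =>
      obtain ⟨v, w, _, rfl⟩ := hy
      exact key_concrete a c u v w
    | zero =>
      have : br (a * (u * (0:A) - 0 * u)) c = 0 := by simp [br]
      rw [this]; exact zero_mem _
    | add y z _ _ hy hz =>
      have h : br (a * (u * (y + z) - (y + z) * u)) c
          = br (a * (u * y - y * u)) c + br (a * (u * z - z * u)) c := by
        simp only [br]; noncomm_ring
      rw [h]; exact add_mem hy hz
    | smul t y _ hy =>
      have h : br (a * (u * (t • y) - (t • y) * u)) c
          = t • br (a * (u * y - y * u)) c := by
        simp only [br, Algebra.mul_smul_comm, Algebra.smul_mul_assoc, mul_sub, sub_mul,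
          smul_sub]
      rw [h]; exact Submodule.smul_mem _ t hy
  | zero =>
    have : br (a * (0:A)) c = 0 := by simp [br]
    rw [this]; exact zero_mem _
  | add y z _ _ hy hz =>
    have h : br (a * (y + z)) c = br (a * y) c + br (a * z) c := by
      simp only [br]; noncomm_ring
    rw [h]; exact add_mem hy hz
  | smul t y _ hy =>
    have h : br (a * (t • y)) c = t • br (a * y) c := by
      simp only [br, Algebra.mul_smul_comm, Algebra.smul_mul_assoc, smul_sub]
    rw [h]; exact Submodule.smul_mem _ t hy

/-- `[m, x] ∈ L₄` for `m ∈ M₃`. -/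
lemma keyM {m : A} (hm : m ∈ mIdeal K A 3) (x : A) : br m x ∈ lcs K A 4 := by
  unfold mIdeal at hm
  induction hm using Submodule.span_induction with
  | mem y hy =>
    obtain ⟨p, ℓ, q, hℓ, rfl⟩ := hy
    have h : br (p * ℓ * q) x = br (p * ℓ) (q * x) - br ((x * p) * ℓ) q := by
      simp only [br]; noncomm_ring
    rw [h]
    exact sub_mem (keyL hℓ p (q * x)) (keyL hℓ (x * p) q)
  | zero =>
    have : br (0:A) x = 0 := by simp [br]
    rw [this]; exact zero_mem _
  | add y z _ _ hy hz =>
    have h : br (y + z) x = br y x + br z x := by simp only [br]; noncomm_ring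
    rw [h]; exact add_mem hy hz
  | smul t y _ hy =>
    have h : br (t • y) x = t • br y x := by
      simp only [br, Algebra.mul_smul_comm, Algebra.smul_mul_assoc, smul_sub]
    rw [h]; exact Submodule.smul_mem _ t hy

/-- Main induction: `[m, L_{k+1}] ⊆ L_{k+4}` for `m ∈ M₃`. -/
lemma keyMain {m : A} (hm : m ∈ mIdeal K A 3) :
    ∀ (k : ℕ) (l : A), l ∈ lcs K A (k+1) → br m l ∈ lcs K A (k+4) := by
  intro k
  induction k with
  | zero => intro l _; exact keyM hm l
  | succ k ih =>
    intro l hl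
    rw [lcs_succ_succ] at hl
    induction hl using Submodule.span_induction with
    | mem y hy =>
      obtain ⟨p, l', hl', rfl⟩ := hy
      have h : br m (p * l' - l' * p) = br (br m p) l' + br p (br m l') := by
        simp only [br]; noncomm_ring
      rw [h]
      refine add_mem ?_ ?_
      · have h4 : br m p ∈ lcs K A 4 := keyM hm p
        have := lie_lcs_mem k 4 (br m p) l' h4 hl'
        have he : 4 + k + 1 = k + 1 + 4 := by omega
        rwa [he] at this
      · have hml' : br m l' ∈ lcs K A (k+4) := ih l' hl'
        have := br_mem_succ hml' p
        have he : k + 4 + 1 = k + 1 + 4 := by omega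
        rwa [he] at this
    | zero => rw [br_zero_right]; exact zero_mem _
    | add y z _ _ hy hz =>
      rw [br_add_right]; exact add_mem hy hz
    | smul t y _ hy =>
      rw [br_smul_right]; exact Submodule.smul_mem _ t hy

end Key

/-- In the free associative algebra over a field of characteristic zero,
`[M₃, L_k] ⊆ L_{k+3}` for every `k ≥ 1`. -/
theorem br_mIdeal_three_lcs_mem_lcs_add_three
    (K : Type*) [Field K] [CharZero K] (X : Type*)
    (k : ℕ) (hk : 1 ≤ k)
    (m : FreeAlgebra K X) (hm : m ∈ mIdeal K (FreeAlgebra K X) 3)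
    (l : FreeAlgebra K X) (hl : l ∈ lcs K (FreeAlgebra K X) k) :
    br m l ∈ lcs K (FreeAlgebra K X) (k + 3) := by
  obtain ⟨k', rfl⟩ : ∃ k', k = k' + 1 := ⟨k - 1, by omega⟩
  have := keyMain hm k' l hl
  have he : k' + 4 = k' + 1 + 3 := by omega
  rwa [he] at this
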